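/- The polynomial α_5(s) = (315/128)s⁵ − (735/128)s⁴ + (399/64)s³ − (279/64)s² + (215/128)s − 35/128 factors as α_5(s) = (1/128)(s − 1)(315s⁴ − 420s³ + 378s² − 180s + 35), and every complex root z of 315s⁴ − 420s³ + 378s² − 180s + 35 satisfies |z| < 1. Consequently, 1 is a simple root of α_5 and all other roots lie strictly inside the unit circle, so the 5-step LIL method satisfies the Dahlquist root condition (zero-stability). -/

import Mathlib

/-!
For the quartic factor `p`, one Graeffe root-squaring step gives `p(z) p(-z) = q(z²)` with
`q = 99225 w⁴ + 61740 w³ + 13734 w² - 5940 w + 1225`, whose leading coefficient exceeds the sum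
of the absolute values of the others (`82639 < 99225`). Such a polynomial has no root `w` with
`‖w‖ ≥ 1`, since its leading term would dominate, so `‖z‖² < 1`. Since `p(1) = 128 ≠ 0`, the
root `1` of `α₅` is simple.
-/

open Polynomial

/-- First characteristic polynomial of the 5-step LIL method, over `ℂ`. -/
noncomputable def lilAlpha5 : Polynomial ℂ :=
  C (315 / 128) * X ^ 5 - C (735 / 128) * X ^ 4 + C (399 / 64) * X ^ 3
    - C (279 / 64) * X ^ 2 + C (215 / 128) * X - C (35 / 128)

open Finset

theorem Polynomial.norm_lt_one_of_isRoot_of_sum_norm_coeff_lt {K : Type*} [NormedDivisionRing K]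
    {p : K[X]} (hp : ∑ i ∈ range p.natDegree, ‖p.coeff i‖ < ‖p.leadingCoeff‖) {a : K}
    (ha : p.IsRoot a) : ‖a‖ < 1 := by
  by_contra! h1
  have hroot : p.leadingCoeff * a ^ p.natDegree = -∑ i ∈ range p.natDegree, p.coeff i * a ^ i := by
    rw [IsRoot.def, eval_eq_sum_range, sum_range_succ, add_comm, coeff_natDegree] at ha
    exact eq_neg_of_add_eq_zero_left ha
  have hle : ‖p.leadingCoeff‖ * ‖a‖ ^ p.natDegree
      ≤ (∑ i ∈ range p.natDegree, ‖p.coeff i‖) * ‖a‖ ^ p.natDegree :=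
    calc ‖p.leadingCoeff‖ * ‖a‖ ^ p.natDegree
        = ‖∑ i ∈ range p.natDegree, p.coeff i * a ^ i‖ := by
          rw [← norm_pow, ← norm_mul, hroot, norm_neg]
      _ ≤ ∑ i ∈ range p.natDegree, ‖p.coeff i‖ * ‖a‖ ^ i := by
          simpa only [norm_mul, norm_pow] using norm_sum_le _ fun i ↦ p.coeff i * a ^ i
      _ ≤ ∑ i ∈ range p.natDegree, ‖p.coeff i‖ * ‖a‖ ^ p.natDegree :=
          sum_le_sum fun i hi ↦ mul_le_mul_of_nonneg_left
            (pow_le_pow_right₀ h1 (mem_range.1 hi).le) (norm_nonneg _)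
      _ = _ := (sum_mul ..).symm
  exact (le_of_mul_le_mul_right hle (pow_pos (one_pos.trans_le h1) _)).not_gt hp

noncomputable def lilQuartic : ℂ[X] :=
  C 315 * X ^ 4 - C 420 * X ^ 3 + C 378 * X ^ 2 - C 180 * X + C 35

noncomputable def lilQuarticGraeffe : ℂ[X] :=
  C 99225 * X ^ 4 + C 61740 * X ^ 3 + C 13734 * X ^ 2 - C 5940 * X + C 1225

lemma eval_lilQuartic (z : ℂ) :
    lilQuartic.eval z = 315 * z ^ 4 - 420 * z ^ 3 + 378 * z ^ 2 - 180 * z + 35 := by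
  simp [lilQuartic]

lemma eval_lilQuartic_mul_eval_neg (z : ℂ) :
    lilQuartic.eval z * lilQuartic.eval (-z) = lilQuarticGraeffe.eval (z ^ 2) := by
  simp only [eval_lilQuartic, lilQuarticGraeffe, eval_add, eval_sub, eval_mul, eval_C, eval_pow,
    eval_X]
  ring

lemma natDegree_lilQuarticGraeffe : lilQuarticGraeffe.natDegree = 4 := by
  unfold lilQuarticGraeffe; compute_degree!

lemma sum_norm_coeff_lilQuarticGraeffe_lt :
    ∑ i ∈ range lilQuarticGraeffe.natDegree, ‖lilQuarticGraeffe.coeff i‖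
      < ‖lilQuarticGraeffe.leadingCoeff‖ := by
  rw [leadingCoeff, natDegree_lilQuarticGraeffe]
  norm_num [sum_range_succ, lilQuarticGraeffe, coeff_X, coeff_C, coeff_X_pow]

lemma norm_lt_one_of_eval_lilQuartic_eq_zero {z : ℂ} (hz : lilQuartic.eval z = 0) : ‖z‖ < 1 := by
  have hsq : lilQuarticGraeffe.IsRoot (z ^ 2) := by
    rw [IsRoot.def, ← eval_lilQuartic_mul_eval_neg, hz, zero_mul]
  have := norm_lt_one_of_isRoot_of_sum_norm_coeff_lt sum_norm_coeff_lilQuarticGraeffe_lt hsq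
  rwa [norm_pow, sq_lt_one_iff₀ (norm_nonneg z)] at this

lemma eval_lilAlpha5 (z : ℂ) : lilAlpha5.eval z = (z - 1) * lilQuartic.eval z / 128 := by
  simp only [lilAlpha5, eval_mul, eval_sub, eval_add, eval_pow, eval_C, eval_X, eval_lilQuartic]
  ring

lemma lilAlpha5_eq_mul : lilAlpha5 = C (1 / 128) * (X - C 1) * lilQuartic :=
  Polynomial.funext fun z ↦ by simp only [eval_lilAlpha5, eval_mul, eval_sub, eval_C, eval_X]; ring

lemma rootMultiplicity_lilAlpha5_one : lilAlpha5.rootMultiplicity 1 = 1 := by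
  have hq : ¬(C (1 / 128 : ℂ) * lilQuartic).IsRoot 1 := by
    norm_num [eval_lilQuartic]
  have hq0 : C (1 / 128 : ℂ) * lilQuartic ≠ 0 := fun h ↦ hq (h ▸ eval_zero)
  rw [lilAlpha5_eq_mul, mul_right_comm, ← pow_one (X - C 1), rootMultiplicity_mul_X_sub_C_pow hq0,
    rootMultiplicity_eq_zero hq]

/-- `α₅(s)` factors as `(1/128)(s − 1)(315s⁴ − 420s³ + 378s² − 180s + 35)`, every
complex root `z` of `315s⁴ − 420s³ + 378s² − 180s + 35` satisfies `|z| < 1`, `1`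
is a simple root of `α₅`, and all other roots lie strictly inside the unit
circle: the 5-step LIL method satisfies the Dahlquist root condition
(zero-stability). -/
theorem lil_root_condition_m5 :
    lilAlpha5 = C (1 / 128) * (X - C 1)
        * (C 315 * X ^ 4 - C 420 * X ^ 3 + C 378 * X ^ 2 - C 180 * X + C 35) ∧
    (∀ z : ℂ, 315 * z ^ 4 - 420 * z ^ 3 + 378 * z ^ 2 - 180 * z + 35 = 0 →
      ‖z‖ < 1) ∧
    lilAlpha5.rootMultiplicity 1 = 1 ∧
    (∀ z : ℂ, lilAlpha5.eval z = 0 → z ≠ 1 → ‖z‖ < 1) := by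
  refine ⟨lilAlpha5_eq_mul, fun z hz ↦ norm_lt_one_of_eval_lilQuartic_eq_zero ?_,
    rootMultiplicity_lilAlpha5_one, fun z hz hz1 ↦ norm_lt_one_of_eval_lilQuartic_eq_zero ?_⟩
  · rwa [eval_lilQuartic]
  · simpa [eval_lilAlpha5, sub_eq_zero, hz1] using hz
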